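/- arXiv:1912.04553 — 2 statements merged into one kernel-verified Lean document; each statement's English description precedes it below -/
import Mathlib

section
/- Let L be a lamination system on S^1 and {I_n} a sequence in L with I_{n+1} ⊆ I_n for all n and ∪_n I_n* = J for some J ∈ L. Then the interior of ∩_n I_n equals J*, and in particular J* ∈ L. -/
open Set Topology

noncomputable section

/-- Stereographic projection from `1 ∈ S¹`. -/
def sproj (z : Circle) : ℝ := (z : ℂ).im / ((z : ℂ).re - 1)

/-- `(a,b,c)` is a positively oriented triple on `S¹`. -/
def posOri (a b c : Circle) : Prop :=
  a ≠ b ∧ b ≠ c ∧ c ≠ a ∧ sproj (a⁻¹ * b) < sproj (a⁻¹ * c)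

/-- The nondegenerate open interval `(u,v)` on `S¹`. -/
def oInt (u v : Circle) : Set Circle := {p | posOri u p v}

/-- `I` is a nondegenerate open interval on `S¹`. -/
def IsND (I : Set Circle) : Prop := ∃ u v : Circle, u ≠ v ∧ I = oInt u v

/-- The dual interval `I* = (v,u)` of `I = (u,v)`, i.e. the interior of the complement. -/
def dual (I : Set Circle) : Set Circle := interior Iᶜ

/-- The leaf `{I, I*}` lies on `J`. -/
def LiesOn (I J : Set Circle) : Prop := I ⊆ J ∨ dual I ⊆ J

/-- A lamination system on `S¹`. -/
structure LamSys (L : Set (Set Circle)) : Prop where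
  nonempty : L.Nonempty
  nd : ∀ I ∈ L, IsND I
  dualMem : ∀ I ∈ L, dual I ∈ L
  unlinked : ∀ I ∈ L, ∀ J ∈ L, LiesOn I J ∨ LiesOn I (dual J)
  chainUnion : ∀ f : ℕ → Set Circle, (∀ n, f n ∈ L) → (∀ n, f n ⊆ f (n + 1)) →
    IsND (⋃ n, f n) → (⋃ n, f n) ∈ L

/-- The leaf associated to an interval. -/
def leafOf (I : Set Circle) : Set (Set Circle) := {I, dual I}

/-- `liminf` of a sequence of sets. -/
def sLiminf (f : ℕ → Set Circle) : Set Circle := ⋃ k, ⋂ n, ⋂ (_ : k ≤ n), f n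

/-- `limsup` of a sequence of sets. -/
def sLimsup (f : ℕ → Set Circle) : Set Circle := ⋂ k, ⋃ n, ⋃ (_ : k ≤ n), f n

/-- The sequence of intervals converges to `J`. -/
def ConvTo (f : ℕ → Set Circle) (J : Set Circle) : Prop :=
  J ⊆ sLiminf f ∧ sLiminf f ⊆ sLimsup f ∧ sLimsup f ⊆ closure J

/-- A gap of a lamination system. -/
def IsGap (L G : Set (Set Circle)) : Prop :=
  G ⊆ L ∧ (∀ I ∈ G, ∀ J ∈ G, I ≠ J → I ∩ J = ∅) ∧ ∀ I ∈ L, ∃ J ∈ G, LiesOn I J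

/-- A gap which is a leaf. -/
def IsLeafGap (G : Set (Set Circle)) : Prop := ∃ I, G = leafOf I

/-- The vertex (endpoint) set of a gap. -/
def vset (G : Set (Set Circle)) : Set Circle := (⋃₀ G)ᶜ

/-- A very full lamination system: every gap is an ideal polygon (finite vertex set). -/
def VeryFull (L : Set (Set Circle)) : Prop := ∀ G, IsGap L G → (vset G).Finite

/-- The set of endpoints of leaves of `L`. -/
def ELset (L : Set (Set Circle)) : Set Circle := ⋃ I ∈ L, frontier I

/-- A rainbow at `p`. -/
def Rainbow (L : Set (Set Circle)) (p : Circle) (f : ℕ → Set Circle) : Prop :=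
  (∀ n, f n ∈ L) ∧ (∀ n, f (n + 1) ⊆ f n) ∧ (⋂ n, f n) = {p}

/-- An `I`-side sequence of leaves. -/
def SideSeq (L : Set (Set Circle)) (I : Set Circle) (f : ℕ → Set Circle) : Prop :=
  (∀ n, f n ∈ L) ∧ (∀ n, I ∉ leafOf (f n)) ∧ (∀ n, LiesOn (f n) I) ∧ ConvTo f I

/-- `I` is isolated in `L`. -/
def IsolatedInt (L : Set (Set Circle)) (I : Set Circle) : Prop := ∀ f, ¬ SideSeq L I f

/-- `C_p^I`. -/
def Cset (L : Set (Set Circle)) (p : Circle) (I : Set Circle) : Set (Set Circle) :=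
  {J ∈ L | p ∈ J ∧ J ⊆ I}

/-- The group of self-homeomorphisms of the circle (composition as multiplication). -/
instance : Group (Circle ≃ₜ Circle) where
  mul g h := h.trans g
  one := Homeomorph.refl _
  inv := Homeomorph.symm
  mul_assoc _ _ _ := Homeomorph.ext fun _ => rfl
  one_mul _ := Homeomorph.ext fun _ => rfl
  mul_one _ := Homeomorph.ext fun _ => rfl
  inv_mul_cancel g := Homeomorph.ext fun x => g.symm_apply_apply x

/-- An orientation-preserving homeomorphism of the circle. -/
def OrientPres (g : Circle ≃ₜ Circle) : Prop :=
  ∀ a b c, posOri a b c → posOri (g a) (g b) (g c)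

/-- `L` is invariant under a subgroup `G` of homeomorphisms. -/
def GInv (G : Subgroup (Circle ≃ₜ Circle)) (L : Set (Set Circle)) : Prop :=
  ∀ g ∈ G, ∀ I ∈ L, (⇑g) '' I ∈ L

/-- The image of a gap under a homeomorphism. -/
def gapIm (g : Circle ≃ₜ Circle) (P : Set (Set Circle)) : Set (Set Circle) :=
  (fun I => (⇑g) '' I) '' P

/-- `v_G(P)`, the union of the vertex sets of the `G`-orbit of the gap `P`. -/
def vOrb (G : Subgroup (Circle ≃ₜ Circle)) (P : Set (Set Circle)) : Set Circle :=
  ⋃ g ∈ G, vset (gapIm g P)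

/-- A loose lamination system: distinct non-leaf gaps have disjoint vertex sets. -/
def Loose (L : Set (Set Circle)) : Prop :=
  ∀ P Q, IsGap L P → IsGap L Q → ¬ IsLeafGap P → ¬ IsLeafGap Q → P ≠ Q →
    vset P ∩ vset Q = ∅

/-- A pseudo-fibered triple `(L₁, L₂, G)`. -/
structure PFib (L₁ L₂ : Set (Set Circle)) (G : Subgroup (Circle ≃ₜ Circle)) : Prop where
  orient : ∀ g ∈ G, OrientPres g
  fg : G.FG
  lam₁ : LamSys L₁
  lam₂ : LamSys L₂
  inv₁ : GInv G L₁
  inv₂ : GInv G L₂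
  veryFull₁ : VeryFull L₁
  veryFull₂ : VeryFull L₂
  loose₁ : Loose L₁
  loose₂ : Loose L₂
  disjEnds : ELset L₁ ∩ ELset L₂ = ∅

end

/-! Since `I*` is the interior of `Iᶜ`, the complement of `⋃ₙ Iₙ*` is `⋂ₙ closure Iₙ`, so
`J* = interior (⋂ₙ closure Iₙ)`. Open arcs are regular open (`interior (closure I) ⊆ I`), which
lets one drop the closures. Up to a rotation an arc is `(1, w)`, and its regularity is read off on
the line through `sproj`, whose inverse is the Cayley transform `t ↦ (t - i) / (t + i)`. -/

section Stereographic

open Complex Filter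

noncomputable def sprojInv (t : ℝ) : Circle :=
  Circle.ofConjDivSelf (t + I) (by simp [Complex.ext_iff])

theorem coe_sprojInv (t : ℝ) : (sprojInv t : ℂ) = (t - I) / (t + I) := by
  simp [sprojInv, map_add, conj_ofReal, sub_eq_add_neg]

theorem sprojInv_re (t : ℝ) : (sprojInv t : ℂ).re = (t ^ 2 - 1) / (t ^ 2 + 1) := by
  rw [coe_sprojInv]
  simp only [div_re, normSq_apply, sub_re, add_re, sub_im, add_im, ofReal_re, ofReal_im, I_re, I_im]
  field_simp
  ring

theorem sprojInv_im (t : ℝ) : (sprojInv t : ℂ).im = -2 * t / (t ^ 2 + 1) := by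
  rw [coe_sprojInv]
  simp only [div_im, normSq_apply, sub_re, add_re, sub_im, add_im, ofReal_re, ofReal_im, I_re, I_im]
  field_simp
  ring

theorem tendsto_sprojInv_atTop : Tendsto sprojInv atTop (𝓝 1) := by
  have hg : ContinuousAt (fun s : ℝ => (1 - I * s) / (1 + I * s)) 0 := by
    apply ContinuousAt.div (by fun_prop) (by fun_prop)
    simp
  have := hg.tendsto.comp tendsto_inv_atTop_zero
  simp only [ofReal_zero, mul_zero, sub_zero, add_zero, div_one] at this
  refine tendsto_subtype_rng.2 (this.congr' ?_)
  filter_upwards [eventually_gt_atTop 0] with t ht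
  have : (t : ℂ) ≠ 0 := by exact_mod_cast ht.ne'
  rw [Function.comp_apply, coe_sprojInv, ofReal_inv]
  field_simp

theorem sprojInv_ne_one (t : ℝ) : sprojInv t ≠ 1 := by
  intro h
  have h1 := congrArg (fun z : Circle => (z : ℂ).re) h
  simp only [sprojInv_re, Circle.coe_one, one_re] at h1
  rw [div_eq_one_iff_eq (by positivity)] at h1
  linarith

theorem continuous_sprojInv : Continuous sprojInv := by
  have h : Continuous fun t : ℝ => ((t : ℂ) - I) / (t + I) :=
    Continuous.div (by fun_prop) (by fun_prop) fun t => by simp [Complex.ext_iff]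
  exact continuous_induced_rng.2 (h.congr fun t => (coe_sprojInv t).symm)

theorem sproj_sprojInv (t : ℝ) : sproj (sprojInv t) = t := by
  have ht : t ^ 2 + 1 ≠ 0 := by positivity
  rw [sproj, sprojInv_re, sprojInv_im]
  field_simp
  ring

theorem re_ne_one_of_ne_one {z : Circle} (hz : z ≠ 1) : (z : ℂ).re ≠ 1 := by
  intro h
  have him : (z : ℂ).im = 0 := by
    have := Circle.normSq_coe z
    rw [normSq_apply, h] at this
    nlinarith
  exact hz (Circle.ext (Complex.ext (by simpa using h) (by simpa using him)))

theorem sprojInv_sproj {z : Circle} (hz : z ≠ 1) : sprojInv (sproj z) = z := by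
  have hre : (z : ℂ).re - 1 ≠ 0 := sub_ne_zero.2 (re_ne_one_of_ne_one hz)
  have hn := Circle.normSq_coe z
  rw [normSq_apply] at hn
  apply Circle.ext
  apply Complex.ext
  · rw [sprojInv_re, sproj]
    field_simp
    linear_combination (1 - (z : ℂ).re) * hn
  · rw [sprojInv_im, sproj]
    field_simp
    linear_combination (-(z : ℂ).im) * hn

theorem continuousAt_sproj {z : Circle} (hz : z ≠ 1) : ContinuousAt sproj z := by
  unfold sproj
  exact ContinuousAt.div (by fun_prop) (by fun_prop) (sub_ne_zero.2 (re_ne_one_of_ne_one hz))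

end Stereographic

theorem sproj_le_of_mem_closure_oInt_one {w z : Circle} (hz : z ∈ closure (oInt 1 w))
    (hz1 : z ≠ 1) : sproj z ≤ sproj w := by
  have hsub : sproj '' oInt 1 w ⊆ Iic (sproj w) := by
    rintro _ ⟨q, hq, rfl⟩
    simpa using hq.2.2.2.le
  exact closure_minimal hsub isClosed_Iic (mem_closure_image (continuousAt_sproj hz1) hz)

theorem interior_closure_oInt_one_subset (w : Circle) :
    interior (closure (oInt 1 w)) ⊆ oInt 1 w := by
  intro z hz
  have hle : ∀ t, sprojInv t ∈ closure (oInt 1 w) → t ≤ sproj w := fun t ht => by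
    simpa only [sproj_sprojInv] using sproj_le_of_mem_closure_oInt_one ht (sprojInv_ne_one t)
  -- `1` is the limit of `sprojInv t` as `t → ∞`, and these points leave the closure.
  have hz1 : z ≠ 1 := by
    rintro rfl
    obtain ⟨t, ht, hwt⟩ := ((tendsto_sprojInv_atTop.eventually (isOpen_interior.mem_nhds hz)).and
      (Filter.eventually_gt_atTop (sproj w))).exists
    exact (hle t (interior_subset ht)).not_gt hwt
  have hlt : sproj z < sproj w := by
    have hopen : IsOpen (sprojInv ⁻¹' interior (closure (oInt 1 w))) :=
      isOpen_interior.preimage continuous_sprojInv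
    have hIio : sprojInv ⁻¹' interior (closure (oInt 1 w)) ⊆ Iio (sproj w) := by
      rw [← interior_Iic]
      exact interior_maximal (fun t ht => hle t (interior_subset ht)) hopen
    exact hIio (by rwa [mem_preimage, sprojInv_sproj hz1])
  obtain ⟨q, hq⟩ := closure_nonempty_iff.1 ⟨z, interior_subset hz⟩
  exact ⟨hz1.symm, ne_of_apply_ne sproj hlt.ne, hq.2.2.1, by simpa using hlt⟩

theorem oInt_eq_preimage_mul_left (u v : Circle) :
    oInt u v = (u⁻¹ * ·) ⁻¹' oInt 1 (u⁻¹ * v) := by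
  ext p
  simp only [oInt, posOri, mem_ofPred_eq, mem_preimage, inv_one, one_mul, ne_eq,
    eq_inv_mul_iff_mul_eq, mul_one, mul_inv_cancel_left, inv_mul_eq_one, eq_comm (a := v)]

theorem interior_closure_oInt_subset (u v : Circle) :
    interior (closure (oInt u v)) ⊆ oInt u v := by
  rw [oInt_eq_preimage_mul_left, show (u⁻¹ * ·) = ⇑(Homeomorph.mulLeft u⁻¹) from rfl,
    ← Homeomorph.preimage_closure, ← Homeomorph.preimage_interior]
  exact preimage_mono (interior_closure_oInt_one_subset _)

theorem IsND.interior_closure_subset {s : Set Circle} (hs : IsND s) :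
    interior (closure s) ⊆ s := by
  obtain ⟨u, v, -, rfl⟩ := hs
  exact interior_closure_oInt_subset u v

theorem compl_dual (s : Set Circle) : (dual s)ᶜ = closure s := by
  rw [dual, interior_compl, compl_compl]

theorem interior_iInter_closure_eq {X ι : Type*} [TopologicalSpace X] {s : ι → Set X}
    (hs : ∀ i, interior (closure (s i)) ⊆ s i) :
    interior (⋂ i, closure (s i)) = interior (⋂ i, s i) := by
  refine (interior_mono (iInter_mono fun i => subset_closure)).antisymm' ?_
  refine interior_maximal (fun x hx => mem_iInter.2 fun i => ?_) isOpen_interior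
  exact hs i (interior_mono (iInter_subset _ i) hx)

theorem stmt5_general (L : Set (Set Circle)) (hL : LamSys L) (I : ℕ → Set Circle)
    (hmem : ∀ n, I n ∈ L) (J : Set Circle) (hJ : J ∈ L)
    (hU : (⋃ n, dual (I n)) = J) :
    interior (⋂ n, I n) = dual J ∧ dual J ∈ L := by
  refine ⟨?_, hL.dualMem J hJ⟩
  rw [← hU, dual, compl_iUnion]
  simp only [compl_dual]
  exact (interior_iInter_closure_eq fun n => (hL.nd _ (hmem n)).interior_closure_subset).symm

/-- If `{Iₙ}` is a decreasing sequence in a lamination system `L` with `⋃ₙ Iₙ* = J ∈ L`,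
then the interior of `⋂ₙ Iₙ` equals `J*`, and in particular `J* ∈ L`. -/
theorem stmt5 (L : Set (Set Circle)) (hL : LamSys L) (I : ℕ → Set Circle)
    (hmem : ∀ n, I n ∈ L) (hdec : ∀ n, I (n + 1) ⊆ I n) (J : Set Circle) (hJ : J ∈ L)
    (hU : (⋃ n, dual (I n)) = J) :
    interior (⋂ n, I n) = dual J ∧ dual J ∈ L :=
  stmt5_general L hL I hmem J hJ hU
end

section
/- Let L be a lamination system on S^1. If a sequence of leaves {ℓ_n} of L converges to a nondegenerate open interval J (i.e., there are I_n ∈ L with ℓ_n = ℓ(I_n) and J ⊆ liminf I_n ⊆ limsup I_n ⊆ closure(J)), then J ∈ L. -/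
open Set Topology

/-!
Every leaf is an arc of the circle, so pointwise convergence `I n → J` upgrades to
convergence from both sides: each point of `J*` eventually lies in `I n*`, because `I n`
is connected, contains a fixed point of `J` and misses two points of `J*` flanking it.
Two leaves sharing a point of `J` whose duals share a point of `J*` are nested, so the
tail of the sequence is a chain. If infinitely many `I n` lie in `closure J`, their
partial unions form an increasing chain of leaves with union `J`; dually, if infinitely
many `I n*` lie in `closure J*`, then `J* ∈ L`. Otherwise some `I n` reaches into `J*`
while `I n*` reaches into `J`, which contradicts nesting with a later leaf.
-/

open Set Topology Filter Real

lemma exists_partialSups_eq_of_comparable {α : Type*} [SemilatticeSup α] (f : ℕ → α)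
    (hf : ∀ i j, f i ≤ f j ∨ f j ≤ f i) : ∀ k, ∃ i, partialSups f k = f i
  | 0 => ⟨0, partialSups_zero f⟩
  | k + 1 => by
    obtain ⟨i, hi⟩ := exists_partialSups_eq_of_comparable f hf k
    rw [← Order.succ_eq_add_one, partialSups_succ, hi, Order.succ_eq_add_one]
    rcases hf i (k + 1) with h | h
    · exact ⟨k + 1, sup_eq_right.2 h⟩
    · exact ⟨i, sup_eq_left.2 h⟩

section Arcs

lemma sproj_exp {x : ℝ} (h₀ : 0 < x) (h₁ : x < 2 * π) :
    sproj (Circle.exp x) = tan (x / 2 - π / 2) := by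
  have hsin : sin x = 2 * sin (x / 2) * cos (x / 2) := by
    rw [← sin_two_mul, mul_div_cancel₀ _ two_ne_zero]
  have hcos : cos x = 2 * cos (x / 2) ^ 2 - 1 := by
    rw [← cos_two_mul, mul_div_cancel₀ _ two_ne_zero]
  have hpos : 0 < sin (x / 2) := sin_pos_of_pos_of_lt_pi (by linarith) (by linarith)
  have hpyth := sin_sq_add_cos_sq (x / 2)
  rw [sproj, Circle.coe_exp, Complex.exp_ofReal_mul_I_re, Complex.exp_ofReal_mul_I_im,
    tan_eq_sin_div_cos, sin_sub_pi_div_two, cos_sub_pi_div_two, hsin, hcos,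
    div_eq_div_iff (by nlinarith) (by nlinarith)]
  linear_combination (2 * cos (x / 2)) * hpyth

lemma exists_exp_eq_mem_Ico (s : ℝ) (p : Circle) : ∃ r ∈ Ico s (s + 2 * π), Circle.exp r = p := by
  obtain ⟨r, rfl⟩ := Circle.exp_surjective p
  exact ⟨toIcoMod two_pi_pos s r, toIcoMod_mem_Ico _ _ _, Circle.periodic_exp.sub_zsmul_eq _⟩

lemma exists_exp_eq_exp_eq {a b : Circle} (hab : a ≠ b) :
    ∃ s t, s < t ∧ t < s + 2 * π ∧ Circle.exp s = a ∧ Circle.exp t = b := by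
  obtain ⟨s, rfl⟩ := Circle.exp_surjective a
  obtain ⟨t, ht, rfl⟩ := exists_exp_eq_mem_Ico s b
  exact ⟨s, t, ht.1.lt_of_ne (by rintro rfl; exact hab rfl), ht.2, rfl, rfl⟩

variable {s t r : ℝ}

lemma oInt_exp_exp (hst : s < t) (hts : t < s + 2 * π) :
    oInt (Circle.exp s) (Circle.exp t) = Circle.exp '' Ioo s t := by
  have hinj : InjOn Circle.exp (Ico s (s + 2 * π)) := Circle.exp_injOn_Ico (by linarith)
  have hsproj : ∀ r ∈ Ioo s (s + 2 * π),
      sproj ((Circle.exp s)⁻¹ * Circle.exp r) = tan ((r - s) / 2 - π / 2) := fun r hr => by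
    rw [← Circle.exp_neg, ← Circle.exp_add, neg_add_eq_sub,
      sproj_exp (by linarith [hr.1]) (by linarith [hr.2])]
  have hmem : ∀ r ∈ Ioo s (s + 2 * π), (r - s) / 2 - π / 2 ∈ Ioo (-(π / 2)) (π / 2) :=
    fun r hr => ⟨by linarith [hr.1], by linarith [hr.2]⟩
  have ht : t ∈ Ioo s (s + 2 * π) := ⟨hst, hts⟩
  have hsub : Ioo s t ⊆ Ico s (s + 2 * π) := fun r hr => ⟨hr.1.le, hr.2.trans hts⟩
  ext p
  obtain ⟨r, hr, rfl⟩ := exists_exp_eq_mem_Ico s p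
  rw [hinj.mem_image_iff hsub hr]
  constructor
  · rintro ⟨hsr, -, -, hlt⟩
    have hr' : r ∈ Ioo s (s + 2 * π) := ⟨hr.1.lt_of_ne (by rintro rfl; exact hsr rfl), hr.2⟩
    rw [hsproj r hr', hsproj t ht, strictMonoOn_tan.lt_iff_lt (hmem r hr') (hmem t ht)] at hlt
    exact ⟨hr'.1, by linarith⟩
  · rintro hr'
    have hr'' : r ∈ Ioo s (s + 2 * π) := ⟨hr'.1, hr'.2.trans hts⟩
    refine ⟨?_, ?_, ?_, ?_⟩
    · exact hinj.ne (left_mem_Ico.2 (by linarith)) hr hr'.1.ne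
    · exact hinj.ne hr ⟨hst.le, hts⟩ hr'.2.ne
    · exact hinj.ne ⟨hst.le, hts⟩ (left_mem_Ico.2 (by linarith)) hst.ne'
    · rw [hsproj r hr'', hsproj t ht]
      exact strictMonoOn_tan (hmem r hr'') (hmem t ht) (by linarith [hr'.2])

lemma oInt_exp_exp_rev (hst : s < t) (hts : t < s + 2 * π) :
    oInt (Circle.exp t) (Circle.exp s) = Circle.exp '' Ioo t (s + 2 * π) := by
  rw [← Circle.exp_add_two_pi s, oInt_exp_exp hts (by linarith)]

lemma exp_mem_oInt_exp_exp_iff (hst : s < t) (hts : t < s + 2 * π) (hr : r ∈ Ico s (s + 2 * π)) :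
    Circle.exp r ∈ oInt (Circle.exp s) (Circle.exp t) ↔ r ∈ Ioo s t := by
  rw [oInt_exp_exp hst hts,
    (Circle.exp_injOn_Ico (by linarith)).mem_image_iff (fun x hx => ⟨hx.1.le, hx.2.trans hts⟩) hr]

lemma exp_mem_oInt_exp_exp_rev_iff (hst : s < t) (hts : t < s + 2 * π)
    (hr : r ∈ Ico s (s + 2 * π)) :
    Circle.exp r ∈ oInt (Circle.exp t) (Circle.exp s) ↔ r ∈ Ioo t (s + 2 * π) := by
  rw [oInt_exp_exp_rev hst hts,
    (Circle.exp_injOn_Ico (by linarith)).mem_image_iff (fun x hx => ⟨hst.le.trans hx.1.le, hx.2⟩) hr]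

variable {a b p : Circle}

lemma oInt_self (a : Circle) : oInt a a = ∅ :=
  eq_empty_of_forall_notMem fun _ h => h.2.2.1 rfl

lemma ne_of_mem_oInt (hp : p ∈ oInt a b) : a ≠ b :=
  hp.2.2.1.symm

lemma mem_oInt_or_mem_oInt (hab : a ≠ b) (hpa : p ≠ a) (hpb : p ≠ b) :
    p ∈ oInt a b ∨ p ∈ oInt b a := by
  obtain ⟨s, t, hst, hts, rfl, rfl⟩ := exists_exp_eq_exp_eq hab
  obtain ⟨r, hr, rfl⟩ := exists_exp_eq_mem_Ico s p
  rw [exp_mem_oInt_exp_exp_iff hst hts hr, exp_mem_oInt_exp_exp_rev_iff hst hts hr]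
  have hrs : s < r := hr.1.lt_of_ne (by rintro rfl; exact hpa rfl)
  rcases lt_or_gt_of_ne (show r ≠ t by rintro rfl; exact hpb rfl) with hrt | htr
  · exact Or.inl ⟨hrs, hrt⟩
  · exact Or.inr ⟨htr, hr.2⟩

lemma disjoint_oInt (a b : Circle) : Disjoint (oInt a b) (oInt b a) := by
  rcases eq_or_ne a b with rfl | hab
  · simp [oInt_self]
  obtain ⟨s, t, hst, hts, rfl, rfl⟩ := exists_exp_eq_exp_eq hab
  refine disjoint_left.2 fun p hp hp' => ?_
  obtain ⟨r, hr, rfl⟩ := exists_exp_eq_mem_Ico s p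
  rw [exp_mem_oInt_exp_exp_iff hst hts hr] at hp
  rw [exp_mem_oInt_exp_exp_rev_iff hst hts hr] at hp'
  exact (hp.2.trans hp'.1).false

lemma isOpen_oInt (a b : Circle) : IsOpen (oInt a b) := by
  rcases eq_or_ne a b with rfl | hab
  · simp [oInt_self]
  obtain ⟨s, t, hst, hts, rfl, rfl⟩ := exists_exp_eq_exp_eq hab
  rw [oInt_exp_exp hst hts]
  exact isLocalHomeomorph_circleExp.isOpenMap _ isOpen_Ioo

lemma isPreconnected_oInt (a b : Circle) : IsPreconnected (oInt a b) := by
  rcases eq_or_ne a b with rfl | hab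
  · exact oInt_self a ▸ isPreconnected_empty
  obtain ⟨s, t, hst, hts, rfl, rfl⟩ := exists_exp_eq_exp_eq hab
  rw [oInt_exp_exp hst hts]
  exact isPreconnected_Ioo.image _ Circle.exp.continuous.continuousOn

lemma oInt_nonempty (hab : a ≠ b) : (oInt a b).Nonempty := by
  obtain ⟨s, t, hst, hts, rfl, rfl⟩ := exists_exp_eq_exp_eq hab
  rw [oInt_exp_exp hst hts]
  exact (nonempty_Ioo.2 hst).image _

lemma pair_subset_closure_oInt (hab : a ≠ b) : {a, b} ⊆ closure (oInt a b) := by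
  obtain ⟨s, t, hst, hts, rfl, rfl⟩ := exists_exp_eq_exp_eq hab
  have h := image_closure_subset_closure_image (s := Ioo s t) Circle.exp.continuous
  rw [closure_Ioo hst.ne, ← oInt_exp_exp hst hts] at h
  exact insert_subset_iff.2 ⟨h (mem_image_of_mem _ (left_mem_Icc.2 hst.le)),
    singleton_subset_iff.2 (h (mem_image_of_mem _ (right_mem_Icc.2 hst.le)))⟩

lemma closure_oInt (hab : a ≠ b) : closure (oInt a b) = (oInt b a)ᶜ := by
  refine (closure_minimal (disjoint_oInt a b).subset_compl_right
    (isOpen_oInt b a).isClosed_compl).antisymm fun p hp => ?_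
  rcases eq_or_ne p a with rfl | hpa
  · exact pair_subset_closure_oInt hab (mem_insert _ _)
  rcases eq_or_ne p b with rfl | hpb
  · exact pair_subset_closure_oInt hab (mem_insert_of_mem _ rfl)
  exact subset_closure ((mem_oInt_or_mem_oInt hab hpa hpb).resolve_right hp)

lemma exists_oInt_subset_oInt (hp : p ∈ oInt a b) :
    ∃ y₁ ∈ oInt a b, ∃ y₂ ∈ oInt a b, p ∈ oInt y₁ y₂ ∧ oInt y₁ y₂ ⊆ oInt a b := by
  obtain ⟨s, t, hst, hts, rfl, rfl⟩ := exists_exp_eq_exp_eq (ne_of_mem_oInt hp)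
  rw [oInt_exp_exp hst hts] at hp ⊢
  obtain ⟨r, ⟨hsr, hrt⟩, rfl⟩ := hp
  refine ⟨Circle.exp ((s + r) / 2), mem_image_of_mem _ ⟨by linarith, by linarith⟩,
    Circle.exp ((r + t) / 2), mem_image_of_mem _ ⟨by linarith, by linarith⟩, ?_⟩
  rw [oInt_exp_exp (by linarith) (by linarith)]
  exact ⟨mem_image_of_mem _ ⟨by linarith, by linarith⟩,
    image_mono (Ioo_subset_Ioo (by linarith) (by linarith))⟩

lemma subset_oInt_of_isPreconnected {A : Set Circle} {x y₁ y₂ : Circle} (hA : IsPreconnected A)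
    (hy : y₁ ≠ y₂) (hy₁ : y₁ ∉ A) (hy₂ : y₂ ∉ A) (hx : x ∈ A) (hx' : x ∉ oInt y₁ y₂) :
    A ⊆ oInt y₂ y₁ := by
  have hcover : A ⊆ oInt y₂ y₁ ∪ oInt y₁ y₂ := fun q hq =>
    mem_oInt_or_mem_oInt hy.symm (ne_of_mem_of_not_mem hq hy₂) (ne_of_mem_of_not_mem hq hy₁)
  refine hA.subset_left_of_subset_union (isOpen_oInt _ _) (isOpen_oInt _ _) (disjoint_oInt _ _)
    hcover ⟨x, hx, (hcover hx).resolve_right hx'⟩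

end Arcs

section Dual

variable {I I' J : Set Circle}

lemma dual_eq_compl_closure (I : Set Circle) : dual I = (closure I)ᶜ :=
  interior_compl

lemma dual_dual_eq_interior_closure (I : Set Circle) : dual (dual I) = interior (closure I) := by
  rw [dual, dual, ← closure_compl, compl_compl]

lemma dual_subset_compl (I : Set Circle) : dual I ⊆ Iᶜ :=
  interior_subset

lemma dual_subset_dual (h : I ⊆ I') : dual I' ⊆ dual I :=
  interior_mono (compl_subset_compl.2 h)

lemma dual_oInt {a b : Circle} (hab : a ≠ b) : dual (oInt a b) = oInt b a := by
  rw [dual_eq_compl_closure, closure_oInt hab, compl_compl]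

namespace IsND

lemma isOpen (hJ : IsND J) : IsOpen J := by
  obtain ⟨a, b, -, rfl⟩ := hJ
  exact isOpen_oInt a b

lemma isPreconnected (hJ : IsND J) : IsPreconnected J := by
  obtain ⟨a, b, -, rfl⟩ := hJ
  exact isPreconnected_oInt a b

lemma nonempty (hJ : IsND J) : J.Nonempty := by
  obtain ⟨a, b, hab, rfl⟩ := hJ
  exact oInt_nonempty hab

lemma dual (hJ : IsND J) : IsND (dual J) := by
  obtain ⟨a, b, hab, rfl⟩ := hJ
  exact ⟨b, a, hab.symm, dual_oInt hab⟩

lemma dual_dual (hJ : IsND J) : _root_.dual (_root_.dual J) = J := by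
  obtain ⟨a, b, hab, rfl⟩ := hJ
  rw [dual_oInt hab, dual_oInt hab.symm]

lemma interior_closure (hJ : IsND J) : interior (closure J) = J := by
  rw [← dual_dual_eq_interior_closure, hJ.dual_dual]

end IsND

end Dual

namespace LamSys

variable {L : Set (Set Circle)} {A B J : Set Circle}

lemma subset_or_subset (hL : LamSys L) (hA : A ∈ L) (hB : B ∈ L) {p x : Circle}
    (hp : p ∈ A ∩ B) (hx : x ∈ dual A ∩ dual B) : A ⊆ B ∨ B ⊆ A := by
  rcases hL.unlinked A hA B hB with (hAB | hAB) | (hAB | hAB)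
  · exact Or.inl hAB
  · exact absurd (hAB hx.1) (dual_subset_compl B hx.2)
  · exact absurd hp.2 (dual_subset_compl B (hAB hp.1))
  · have := dual_subset_dual hAB
    rw [(hL.nd A hA).dual_dual, (hL.nd B hB).dual_dual] at this
    exact Or.inr this

lemma mem_of_subset_closure_of_subset_iUnion (hL : LamSys L) (hJ : IsND J) {g : ℕ → Set Circle}
    (hg : ∀ k, g k ∈ L) (hnest : ∀ i j, g i ⊆ g j ∨ g j ⊆ g i) (hsub : ∀ k, g k ⊆ closure J)
    (hcov : J ⊆ ⋃ k, g k) : J ∈ L := by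
  have hunion : ⋃ k, g k = J := by
    refine subset_antisymm ?_ hcov
    rw [← hJ.interior_closure]
    exact interior_maximal (iUnion_subset hsub) (isOpen_iUnion fun k => (hL.nd _ (hg k)).isOpen)
  have hunion' : ⋃ k, partialSups g k = J := (iSup_partialSups_eq g).trans hunion
  have hmem : ∀ k, partialSups g k ∈ L := fun k => by
    obtain ⟨i, hi⟩ := exists_partialSups_eq_of_comparable g hnest k
    exact hi ▸ hg i
  have := hL.chainUnion (partialSups g) hmem (fun k => (partialSups g).monotone k.le_succ)
    (hunion' ▸ hJ)
  rwa [hunion'] at this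

end LamSys

section Convergence

variable {L : Set (Set Circle)} {I : ℕ → Set Circle} {J : Set Circle}

lemma ConvTo.eventually_mem (h : ConvTo I J) {p : Circle} (hp : p ∈ J) :
    ∀ᶠ n in atTop, p ∈ I n := by
  obtain ⟨k, hk⟩ := mem_iUnion.1 (h.1 hp)
  exact eventually_atTop.2 ⟨k, fun n hn => mem_iInter₂.1 hk n hn⟩

lemma ConvTo.eventually_notMem (h : ConvTo I J) {p : Circle} (hp : p ∈ dual J) :
    ∀ᶠ n in atTop, p ∉ I n := by
  rw [dual_eq_compl_closure] at hp
  by_contra hfreq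
  refine hp (h.2.2 (mem_iInter.2 fun k => ?_))
  obtain ⟨n, hn, hpn⟩ := frequently_atTop.1 (not_eventually.1 hfreq) k
  exact mem_iUnion₂.2 ⟨n, hn, not_not.1 hpn⟩

/-- Pointwise convergence of the leaves `ℓ(I n)` to `ℓ(J)` from both sides; unlike `ConvTo`,
it is invariant under passing to dual intervals. -/
def LeafConvTo (I : ℕ → Set Circle) (J : Set Circle) : Prop :=
  (∀ p ∈ J, ∀ᶠ n in atTop, p ∈ I n) ∧ ∀ p ∈ dual J, ∀ᶠ n in atTop, p ∈ dual (I n)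

lemma ConvTo.leafConvTo (hL : LamSys L) (hI : ∀ n, I n ∈ L) (hJ : IsND J) (h : ConvTo I J) :
    LeafConvTo I J := by
  refine ⟨fun p => h.eventually_mem, fun p hp => ?_⟩
  obtain ⟨u, v, huv, rfl⟩ := hJ
  obtain ⟨p₀, hp₀⟩ := oInt_nonempty huv
  have hdual := dual_oInt huv
  rw [hdual] at hp
  obtain ⟨y₁, hy₁, y₂, hy₂, hpy, hsub⟩ := exists_oInt_subset_oInt hp
  have hp₀y : p₀ ∉ oInt y₁ y₂ := fun h => disjoint_left.1 (disjoint_oInt u v) hp₀ (hsub h)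
  filter_upwards [h.eventually_mem hp₀, h.eventually_notMem (hdual ▸ hy₁),
    h.eventually_notMem (hdual ▸ hy₂)] with n hp₀n hy₁n hy₂n
  have hIn : I n ⊆ oInt y₂ y₁ := subset_oInt_of_isPreconnected (hL.nd _ (hI n)).isPreconnected
    (ne_of_mem_oInt hpy) hy₁n hy₂n hp₀n hp₀y
  exact dual_subset_dual hIn ((dual_oInt (ne_of_mem_oInt hpy).symm).symm ▸ hpy)

namespace LeafConvTo

lemma dual (hL : LamSys L) (hI : ∀ n, I n ∈ L) (hJ : IsND J) (h : LeafConvTo I J) :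
    LeafConvTo (fun n => _root_.dual (I n)) (_root_.dual J) := by
  refine ⟨h.2, ?_⟩
  simpa only [hJ.dual_dual, fun n => (hL.nd _ (hI n)).dual_dual] using h.1

lemma exists_nested (hL : LamSys L) (hI : ∀ n, I n ∈ L) (hJ : IsND J) (h : LeafConvTo I J) :
    ∃ N, ∀ n ≥ N, ∀ m ≥ N, I n ⊆ I m ∨ I m ⊆ I n := by
  obtain ⟨p, hp⟩ := hJ.nonempty
  obtain ⟨x, hx⟩ := hJ.dual.nonempty
  obtain ⟨N, hN⟩ := eventually_atTop.1 ((h.1 p hp).and (h.2 x hx))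
  exact ⟨N, fun n hn m hm => hL.subset_or_subset (hI n) (hI m)
    ⟨(hN n hn).1, (hN m hm).1⟩ ⟨(hN n hn).2, (hN m hm).2⟩⟩

lemma mem_of_frequently_subset_closure (hL : LamSys L) (hI : ∀ n, I n ∈ L) (hJ : IsND J)
    (h : LeafConvTo I J) (hfreq : ∃ᶠ n in atTop, I n ⊆ closure J) : J ∈ L := by
  obtain ⟨N, hN⟩ := h.exists_nested hL hI hJ
  obtain ⟨φ, hφ, hφN⟩ := extraction_of_frequently_atTop (hfreq.and_eventually (eventually_ge_atTop N))
  refine hL.mem_of_subset_closure_of_subset_iUnion hJ (fun k => hI (φ k))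
    (fun i j => hN _ (hφN i).2 _ (hφN j).2) (fun k => (hφN k).1) fun p hp => ?_
  obtain ⟨k, hk⟩ := (hφ.tendsto_atTop.eventually (h.1 p hp)).exists
  exact mem_iUnion.2 ⟨k, hk⟩

lemma mem (hL : LamSys L) (hI : ∀ n, I n ∈ L) (hJ : IsND J) (h : LeafConvTo I J) : J ∈ L := by
  by_cases hA : ∃ᶠ n in atTop, I n ⊆ closure J
  · exact h.mem_of_frequently_subset_closure hL hI hJ hA
  by_cases hB : ∃ᶠ n in atTop, _root_.dual (I n) ⊆ closure (_root_.dual J)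
  · have := (h.dual hL hI hJ).mem_of_frequently_subset_closure hL (fun n => hL.dualMem _ (hI n))
      hJ.dual hB
    exact hJ.dual_dual ▸ hL.dualMem _ this
  obtain ⟨N, hN⟩ := h.exists_nested hL hI hJ
  rw [not_frequently] at hA hB
  obtain ⟨n, hn, hAn, hBn⟩ := ((eventually_ge_atTop N).and (hA.and hB)).exists
  obtain ⟨x, hxI, hxJ⟩ := not_subset.1 hAn
  obtain ⟨q, hqI, hqJ⟩ := not_subset.1 hBn
  rw [← mem_compl_iff, ← dual_eq_compl_closure] at hxJ hqJ
  rw [hJ.dual_dual] at hqJ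
  obtain ⟨m, hm, hxm, hqm⟩ := ((eventually_ge_atTop N).and ((h.2 x hxJ).and (h.1 q hqJ))).exists
  rcases hN n hn m hm with hnm | hmn
  · exact (dual_subset_compl _ hxm (hnm hxI)).elim
  · exact (dual_subset_compl _ hqI (hmn hqm)).elim

end LeafConvTo

end Convergence

/-- If a sequence of leaves of a lamination system `L` converges to a nondegenerate
open interval `J`, then `J ∈ L`. -/
theorem stmt6 (L : Set (Set Circle)) (hL : LamSys L) (ℓ : ℕ → Set (Set Circle))
    (J : Set Circle) (hJ : IsND J)
    (hconv : ∃ I : ℕ → Set Circle, (∀ n, I n ∈ L) ∧ (∀ n, ℓ n = leafOf (I n)) ∧ ConvTo I J) :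
    J ∈ L := by
  obtain ⟨I, hI, -, hIJ⟩ := hconv
  exact (hIJ.leafConvTo hL hI hJ).mem hL hI hJ
end
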